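/- arXiv:2411.01140 — 2 statements merged into one kernel-verified Lean document; each statement's English description precedes it below -/
import Mathlib

section
/- For fixed real numbers K ≥ 2 and L ≥ 2, the function r ↦ K·ln(1.25·(r−1)·K·L + 1.25·L)/ln(1.25·K·L·r) is strictly increasing on [2, ∞). -/
theorem stmt_6 (K L : ℝ) (hK : 2 ≤ K) (hL : 2 ≤ L) :
    StrictMonoOn
      (fun r : ℝ => K * Real.log (1.25 * (r - 1) * K * L + 1.25 * L) / Real.log (1.25 * K * L * r))
      (Set.Ici (2 : ℝ)) := by
  have hK0 : (0:ℝ) < K := by linarith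
  have hL0 : (0:ℝ) < L := by linarith
  have hc : (5:ℝ) ≤ 1.25 * K * L := by nlinarith
  have key : ∀ r : ℝ, 2 ≤ r →
      HasDerivAt (fun r : ℝ =>
          K * Real.log (1.25 * (r - 1) * K * L + 1.25 * L) / Real.log (1.25 * K * L * r))
        ((K * (1.25 * K * L / (1.25 * (r - 1) * K * L + 1.25 * L)) * Real.log (1.25 * K * L * r)
            - K * Real.log (1.25 * (r - 1) * K * L + 1.25 * L)
              * (1.25 * K * L / (1.25 * K * L * r)))
          / (Real.log (1.25 * K * L * r)) ^ 2) r := by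
    intro r hr
    have hA1 : (1:ℝ) < 1.25 * (r - 1) * K * L + 1.25 * L := by nlinarith
    have hApos : (0:ℝ) < 1.25 * (r - 1) * K * L + 1.25 * L := by linarith
    have hB1 : (1:ℝ) < 1.25 * K * L * r := by nlinarith
    have hBpos : (0:ℝ) < 1.25 * K * L * r := by linarith
    have hlogBpos : 0 < Real.log (1.25 * K * L * r) := Real.log_pos hB1
    have hA : HasDerivAt (fun r : ℝ => 1.25 * (r - 1) * K * L + 1.25 * L) (1.25 * K * L) r := by
      have h := (((((hasDerivAt_id r).sub_const 1).const_mul 1.25).mul_const K).mul_const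
        L).add_const (1.25 * L)
      rw [show (1.25:ℝ) * K * L = 1.25 * 1 * K * L by ring]
      exact h
    have hB : HasDerivAt (fun r : ℝ => 1.25 * K * L * r) (1.25 * K * L) r := by
      have h := (hasDerivAt_id r).const_mul (1.25 * K * L)
      simpa using h
    have hlogA := hA.log (ne_of_gt hApos)
    have hlogB := hB.log (ne_of_gt hBpos)
    exact (hlogA.const_mul K).div hlogB (ne_of_gt hlogBpos)
  apply strictMonoOn_of_deriv_pos (convex_Ici 2)
  · exact fun r hr => ((key r hr).continuousAt).continuousWithinAt
  · intro r hr
    rw [interior_Ici] at hr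
    have hr2 : (2:ℝ) ≤ r := le_of_lt hr
    rw [(key r hr2).deriv]
    have hA1 : (1:ℝ) < 1.25 * (r - 1) * K * L + 1.25 * L := by nlinarith
    have hApos : (0:ℝ) < 1.25 * (r - 1) * K * L + 1.25 * L := by linarith
    have hB1 : (1:ℝ) < 1.25 * K * L * r := by nlinarith
    have hBpos : (0:ℝ) < 1.25 * K * L * r := by linarith
    have hAB : 1.25 * (r - 1) * K * L + 1.25 * L < 1.25 * K * L * r := by nlinarith
    have hlogA : 0 < Real.log (1.25 * (r - 1) * K * L + 1.25 * L) := Real.log_pos hA1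
    have hlogB : 0 < Real.log (1.25 * K * L * r) := Real.log_pos hB1
    have hloglt : Real.log (1.25 * (r - 1) * K * L + 1.25 * L) < Real.log (1.25 * K * L * r) :=
      Real.log_lt_log hApos hAB
    have hdivlt : 1.25 * K * L / (1.25 * K * L * r)
        < 1.25 * K * L / (1.25 * (r - 1) * K * L + 1.25 * L) :=
      div_lt_div_of_pos_left (by linarith) hApos hAB
    have hnum : 1.25 * K * L / (1.25 * K * L * r)
          * Real.log (1.25 * (r - 1) * K * L + 1.25 * L)
        < 1.25 * K * L / (1.25 * (r - 1) * K * L + 1.25 * L) * Real.log (1.25 * K * L * r) := by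
      apply mul_lt_mul'' hdivlt hloglt (le_of_lt (div_pos (by linarith) hBpos)) (le_of_lt hlogA)
    apply div_pos
    · nlinarith
    · positivity
end

section
/- Let K ≥ 2, L ≥ 2, r ≥ 2 be integers, D > 0, ε > 0. Then (2D/(K·ε²))·ln(1.25·(r−1)·K·L + 1.25·L) > (2D/(K²·ε²))·ln(1.25·K·L·r). -/
theorem stmt_11 (K L r : ℤ) (hK : 2 ≤ K) (hL : 2 ≤ L) (hr : 2 ≤ r)
    (D ε : ℝ) (hD : 0 < D) (hε : 0 < ε) :
    (2 * D / ((K : ℝ) * ε ^ 2)) * Real.log (1.25 * ((r : ℝ) - 1) * K * L + 1.25 * L) >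
      (2 * D / ((K : ℝ) ^ 2 * ε ^ 2)) * Real.log (1.25 * (K : ℝ) * L * r) := by
  have hK' : (2:ℝ) ≤ (K:ℝ) := by exact_mod_cast hK
  have hL' : (2:ℝ) ≤ (L:ℝ) := by exact_mod_cast hL
  have hr' : (2:ℝ) ≤ (r:ℝ) := by exact_mod_cast hr
  have hKpos : (0:ℝ) < (K:ℝ) := by linarith
  set A : ℝ := 1.25 * ((r : ℝ) - 1) * K * L + 1.25 * L with hA
  set B : ℝ := 1.25 * (K : ℝ) * L * r with hB
  clear_value A B
  have hKL : (4:ℝ) ≤ (K:ℝ) * L := by nlinarith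
  have hrKL : (4:ℝ) ≤ ((r:ℝ) - 1) * ((K:ℝ) * L) := by nlinarith
  have h75 : (15/2:ℝ) ≤ A := by rw [hA]; nlinarith
  have hA1 : (1:ℝ) < A := by linarith
  have hBpos : (0:ℝ) < B := by rw [hB]; nlinarith
  have h3 : (0:ℝ) ≤ ((K:ℝ)*L - 4) * (8.125 * r - 9.375) :=
    mul_nonneg (by linarith) (by linarith)
  have h7B : B < (15/2) * A := by rw [hA, hB]; nlinarith [h3]
  have hsq : (15/2) * A ≤ A ^ 2 := by nlinarith
  have hAB : B < A ^ 2 := by linarith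
  have hlogA : 0 < Real.log A := Real.log_pos hA1
  have key : (K:ℝ) * Real.log A > Real.log B := by
    have h1 : Real.log B < Real.log (A ^ 2) := Real.log_lt_log hBpos hAB
    have h2 : Real.log (A ^ 2) = 2 * Real.log A := by
      rw [Real.log_pow]; push_cast; ring
    nlinarith
  have hc : (0:ℝ) < 2 * D / ((K:ℝ) ^ 2 * ε ^ 2) := by positivity
  have heq : 2 * D / ((K : ℝ) * ε ^ 2) = (2 * D / ((K:ℝ) ^ 2 * ε ^ 2)) * K := by
    field_simp
  rw [heq]
  calc (2 * D / ((K:ℝ) ^ 2 * ε ^ 2)) * K * Real.log A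
      = (2 * D / ((K:ℝ) ^ 2 * ε ^ 2)) * ((K:ℝ) * Real.log A) := by ring
    _ > (2 * D / ((K:ℝ) ^ 2 * ε ^ 2)) * Real.log B := by
        exact (mul_lt_mul_iff_right₀ hc).mpr key
end
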